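/- Define J* : ℝ³×ℝ³ → ℝ by J*(ω,v) = (1/2)·‖t(exp(X(ω,v)))‖², where t(g) ∈ ℝ³ is the top-right 3×1 block of the 4×4 matrix g. Let R ≥ 2 and suppose L′ ≥ 0 is such that ‖∇J*(θ) − ∇J*(θ′)‖ ≤ L′·‖θ − θ′‖ for all θ, θ′ ∈ ℝ³×ℝ³ with ‖θ‖ ≤ R and ‖θ′‖ ≤ R (6-vector Euclidean norm). Then L′ ≥ (3/8)·(8·sin 1 + 10·cos 1 − 12)·R²; in particular L′ ≥ 0.0505·R². -/

import Mathlib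

open scoped Matrix
open NormedSpace

/-- ℝ³ with the Euclidean norm. -/
abbrev E3 := EuclideanSpace ℝ (Fin 3)

/-- ℝ³ × ℝ³ with the 6-vector Euclidean norm `√(‖ω‖² + ‖v‖²)`. -/
abbrev D6 := WithLp 2 (E3 × E3)

/-- The hat map: `hat ω` is the skew-symmetric matrix with `hat ω *ᵥ x = ω × x`. -/
def hat (ω : E3) : Matrix (Fin 3) (Fin 3) ℝ :=
  !![0, -ω 2, ω 1; ω 2, 0, -ω 0; -ω 1, ω 0, 0]

/-- The homogeneous 4×4 representation of the se(3) element `(ω, v)`. -/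
def seX (ω v : E3) : Matrix (Fin 4) (Fin 4) ℝ :=
  Matrix.of fun i j =>
    if hi : (i : ℕ) < 3 then
      if hj : (j : ℕ) < 3 then hat ω ⟨i, hi⟩ ⟨j, hj⟩ else v ⟨i, hi⟩
    else 0

/-- The translation part of a 4×4 matrix: its top-right 3×1 block, as a Euclidean vector. -/
noncomputable def tPart (g : Matrix (Fin 4) (Fin 4) ℝ) : E3 :=
  (WithLp.equiv 2 (Fin 3 → ℝ)).symm fun i => g i.castSucc (Fin.last 3)

/-- The translation-distance objective `J*(ω,v) = ½‖t(exp X(ω,v))‖²`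
as a function of the 6-vector `θ = (ω,v)`. -/
noncomputable def Jstar (θ : D6) : ℝ :=
  (1 / 2) * ‖tPart (NormedSpace.exp (seX (WithLp.equiv 2 (E3 × E3) θ).1
    (WithLp.equiv 2 (E3 × E3) θ).2))‖ ^ 2


/-!
Along the plane `θ = ((x,0,0), (0,w,0))` the matrix `C = X(θ)` satisfies `C³ = -x² C`, so
Rodrigues' formula `exp C = 1 + (sin x / x) C + ((1 - cos x) / x²) C²` gives
`J*(θ) = w² (1 - cos x) / x²`. The `x`-components of `∇J*` at `x = 1` and `x = -1` differ by
`2 w² (2 - 2 cos 1 - sin 1)`, while the two points are at distance `2`; taking `w² = R² - 1` puts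
both on the sphere of radius `R`, so `L' ≥ (R² - 1)(2 - 2 cos 1 - sin 1)`, and numerical bounds on
`sin 1`, `cos 1` give the two stated estimates for `R ≥ 2`.
-/

open scoped RealInnerProductSpace

section Rodrigues

variable {𝔸 : Type*} [NormedRing 𝔸] [NormedAlgebra ℝ 𝔸]

theorem hasDerivAt_rodrigues (C : 𝔸) {c : ℝ} (hc : c ≠ 0) (t : ℝ) :
    HasDerivAt
      (fun t : ℝ => 1 + (Real.sin (t * c) / c) • C + ((1 - Real.cos (t * c)) / c ^ 2) • C ^ 2)
      (Real.cos (t * c) • C + (Real.sin (t * c) / c) • C ^ 2) t := by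
  have hsin : HasDerivAt (fun t : ℝ => Real.sin (t * c) / c) (Real.cos (t * c)) t :=
    ((hasDerivAt_mul_const c).sin.div_const c).congr_deriv (mul_div_cancel_right₀ _ hc)
  have hcos : HasDerivAt (fun t : ℝ => (1 - Real.cos (t * c)) / c ^ 2) (Real.sin (t * c) / c) t :=
    (((hasDerivAt_mul_const c).cos.const_sub 1).div_const (c ^ 2)).congr_deriv (by field_simp)
  exact ((hsin.smul_const C).const_add 1).add (hcos.smul_const (C ^ 2))

/-- Rodrigues' formula. -/
theorem NormedSpace.exp_eq_of_pow_three_eq [CompleteSpace 𝔸] {C : 𝔸} {c : ℝ} (hc : c ≠ 0)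
    (hC : C ^ 3 = -c ^ 2 • C) :
    exp C = 1 + (Real.sin c / c) • C + ((1 - Real.cos c) / c ^ 2) • C ^ 2 := by
  set M : ℝ → 𝔸 := fun t =>
    1 + (Real.sin (t * c) / c) • C + ((1 - Real.cos (t * c)) / c ^ 2) • C ^ 2
  have hCM (t : ℝ) : C * M t = Real.cos (t * c) • C + (Real.sin (t * c) / c) • C ^ 2 := by
    have hC' : C * C ^ 2 = -c ^ 2 • C := by rw [← pow_succ', hC]
    simp only [M, mul_add, mul_one, mul_smul_comm, ← sq, hC']
    match_scalars
    · field_simp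
      ring
    · field_simp
  -- `M` solves `M' = C M`, `M 0 = 1`, so `exp (-t C) * M t` is constant.
  have hconst_deriv (t : ℝ) : HasDerivAt (fun t : ℝ => exp (t • -C) * M t) 0 t :=
    ((hasDerivAt_exp_smul_const (-C) t).mul (hasDerivAt_rodrigues C hc t)).congr_deriv <| by
      rw [← hCM, mul_assoc, neg_mul, mul_neg, neg_add_cancel]
  have hconst := is_const_of_deriv_eq_zero (fun t => (hconst_deriv t).differentiableAt)
    (fun t => (hconst_deriv t).deriv) 1 0
  simp only [one_smul, zero_smul, exp_zero, one_mul, M, zero_mul, Real.sin_zero, Real.cos_zero,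
    zero_div, sub_self, add_zero, mul_one] at hconst
  have hmem (x : 𝔸) : x ∈ Metric.eball (0 : 𝔸) (expSeries ℝ 𝔸).radius := by
    simp [expSeries_radius_eq_top]
  have hinv : exp C * exp (-C) = 1 := by
    rw [← exp_add_of_commute_of_mem_ball (Commute.refl C).neg_right (hmem _) (hmem _),
      add_neg_cancel, exp_zero]
  simpa [← mul_assoc, hinv] using (congrArg (exp C * ·) hconst).symm

end Rodrigues

-- `exp` only sees the topology of matrices, so any normed-algebra structure may be chosen.
theorem Matrix.exp_eq_of_pow_three_eq {n : Type*} [Fintype n] [DecidableEq n] {C : Matrix n n ℝ}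
    {c : ℝ} (hc : c ≠ 0) (hC : C ^ 3 = -c ^ 2 • C) :
    exp C = 1 + (Real.sin c / c) • C + ((1 - Real.cos c) / c ^ 2) • C ^ 2 := by
  let _ : NormedRing (Matrix n n ℝ) := Matrix.linftyOpNormedRing
  let _ : NormedAlgebra ℝ (Matrix n n ℝ) := Matrix.linftyOpNormedAlgebra
  exact NormedSpace.exp_eq_of_pow_three_eq hc hC

theorem inner_gradient_eq_of_hasDerivAt {E : Type*} [NormedAddCommGroup E]
    [InnerProductSpace ℝ E] [CompleteSpace E] {f : E → ℝ} {x u : E} {g : ℝ → ℝ} {g' : ℝ}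
    (hf : DifferentiableAt ℝ f x) (hfg : ∀ᶠ s in nhds 0, f (x + s • u) = g s)
    (hg : HasDerivAt g g' 0) : ⟪gradient f x, u⟫ = g' := by
  have hline : HasDerivAt (fun s : ℝ => x + s • u) u 0 := by
    simpa using ((hasDerivAt_id (0 : ℝ)).smul_const u).const_add x
  have hf₀ : DifferentiableAt ℝ f (x + (0 : ℝ) • u) := by simpa using hf
  have hcomp : HasDerivAt (fun s : ℝ => f (x + s • u)) (fderiv ℝ f x u) 0 := by
    simpa [Function.comp_def] using hf₀.hasFDerivAt.comp_hasDerivAt (0 : ℝ) hline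
  rw [inner_gradient_left]
  exact hcomp.unique (hg.congr_of_eventuallyEq hfg)

theorem hasDerivAt_one_sub_cos_div_sq {x : ℝ} (hx : x ≠ 0) :
    HasDerivAt (fun x => (1 - Real.cos x) / x ^ 2)
      ((x * Real.sin x - 2 * (1 - Real.cos x)) / x ^ 3) x := by
  refine (((Real.hasDerivAt_cos x).const_sub 1).div (hasDerivAt_pow 2 x)
    (pow_ne_zero 2 hx)).congr_deriv ?_
  field_simp
  ring

theorem norm_tPart_sq (g : Matrix (Fin 4) (Fin 4) ℝ) :
    ‖tPart g‖ ^ 2 = ∑ i : Fin 3, g i.castSucc (Fin.last 3) ^ 2 := by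
  simp [tPart, EuclideanSpace.norm_sq_eq]

def seXLinearMap : D6 →ₗ[ℝ] Matrix (Fin 4) (Fin 4) ℝ where
  toFun θ := seX (WithLp.equiv 2 (E3 × E3) θ).1 (WithLp.equiv 2 (E3 × E3) θ).2
  map_add' θ θ' := by
    ext i j
    fin_cases i <;> fin_cases j <;> simp [seX, hat] <;> ring
  map_smul' c θ := by
    ext i j
    fin_cases i <;> fin_cases j <;> simp [seX, hat]

theorem Jstar_apply (θ : D6) : Jstar θ = 1 / 2 * ‖tPart (exp (seXLinearMap θ))‖ ^ 2 := rfl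

theorem differentiable_Jstar : Differentiable ℝ Jstar := by
  -- synthesized before the local matrix norm is introduced: with it in scope the search times out
  have : ContinuousSMul ℝ D6 := inferInstance
  let _ : NormedRing (Matrix (Fin 4) (Fin 4) ℝ) := Matrix.linftyOpNormedRing
  let _ : NormedAlgebra ℝ (Matrix (Fin 4) (Fin 4) ℝ) := Matrix.linftyOpNormedAlgebra
  have hentry (i j : Fin 4) : Differentiable ℝ (fun θ : D6 => exp (seXLinearMap θ) i j) :=
    (Matrix.entryLinearMap ℝ ℝ i j).toContinuousLinearMap.differentiable.comp
      (Differentiable.comp (fun g => (exp_analytic g).differentiableAt)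
        seXLinearMap.toContinuousLinearMap.differentiable)
  have hJ : Jstar = fun θ =>
      1 / 2 * ∑ i : Fin 3, exp (seXLinearMap θ) i.castSucc (Fin.last 3) ^ 2 := by
    ext θ
    rw [Jstar_apply, norm_tPart_sq]
  rw [hJ]
  exact (Differentiable.fun_sum fun i _ => (hentry _ _).pow 2).const_mul _

noncomputable def twist (x w : ℝ) : D6 := WithLp.toLp 2 (!₂[x, 0, 0], !₂[0, w, 0])

def twistMatrix (x w : ℝ) : Matrix (Fin 4) (Fin 4) ℝ :=
  !![0, 0, 0, 0; 0, 0, -x, w; 0, x, 0, 0; 0, 0, 0, 0]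

theorem twist_add_smul (x w s a b : ℝ) :
    twist x w + s • twist a b = twist (x + s * a) (w + s * b) := by
  apply WithLp.ofLp_injective
  ext i <;> fin_cases i <;> simp [twist]

theorem twist_sub (x w a b : ℝ) : twist x w - twist a b = twist (x - a) (w - b) := by
  apply WithLp.ofLp_injective
  ext i <;> fin_cases i <;> simp [twist]

theorem norm_twist (x w : ℝ) : ‖twist x w‖ = √(x ^ 2 + w ^ 2) := by
  simp [twist, WithLp.prod_norm_eq_of_L2, EuclideanSpace.norm_eq, Fin.sum_univ_three,
    Real.sq_sqrt, sq_nonneg]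

theorem seXLinearMap_twist (x w : ℝ) : seXLinearMap (twist x w) = twistMatrix x w := by
  ext i j
  fin_cases i <;> fin_cases j <;> simp [seXLinearMap, seX, hat, twist, twistMatrix]

theorem twistMatrix_sq (x w : ℝ) :
    twistMatrix x w ^ 2 = !![0, 0, 0, 0; 0, -x ^ 2, 0, 0; 0, 0, -x ^ 2, x * w; 0, 0, 0, 0] := by
  ext i j
  fin_cases i <;> fin_cases j <;> simp [twistMatrix, sq, Matrix.mul_apply, Fin.sum_univ_four]

theorem twistMatrix_pow_three (x w : ℝ) : twistMatrix x w ^ 3 = -x ^ 2 • twistMatrix x w := by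
  rw [pow_succ, twistMatrix_sq]
  ext i j
  fin_cases i <;> fin_cases j <;> simp [twistMatrix, Matrix.mul_apply, Fin.sum_univ_four]

theorem Jstar_twist {x : ℝ} (hx : x ≠ 0) (w : ℝ) :
    Jstar (twist x w) = w ^ 2 * ((1 - Real.cos x) / x ^ 2) := by
  rw [Jstar_apply, seXLinearMap_twist,
    Matrix.exp_eq_of_pow_three_eq hx (twistMatrix_pow_three x w), twistMatrix_sq, norm_tPart_sq]
  simp [twistMatrix, Fin.sum_univ_three]
  field_simp
  linear_combination w ^ 2 * Real.sin_sq_add_cos_sq x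

theorem inner_gradient_Jstar_twist {x : ℝ} (hx : x ≠ 0) (w : ℝ) :
    ⟪gradient Jstar (twist x w), twist 1 0⟫ =
      w ^ 2 * ((x * Real.sin x - 2 * (1 - Real.cos x)) / x ^ 3) := by
  refine inner_gradient_eq_of_hasDerivAt (differentiable_Jstar _) ?_
    ((HasDerivAt.comp_const_add x 0 (by simpa using hasDerivAt_one_sub_cos_div_sq hx)).const_mul
      (w ^ 2))
  have hne : ∀ᶠ s in nhds (0 : ℝ), x + s ≠ 0 :=
    (continuous_const.add continuous_id).continuousAt.eventually_ne (by simpa using hx)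
  filter_upwards [hne] with s hs
  rw [twist_add_smul, Jstar_twist (by simpa using hs)]
  simp

-- `exp i` against its Taylor polynomial of degree 7.
theorem norm_exp_I_sub_le :
    ‖Complex.exp Complex.I - (389 / 720 + 4241 / 5040 * Complex.I)‖ ≤ 1 / 35840 := by
  have h := Complex.exp_bound (x := Complex.I) (by simp) (n := 8) (by norm_num)
  have hsum : ∑ m ∈ Finset.range 8, Complex.I ^ m / m.factorial =
      389 / 720 + 4241 / 5040 * Complex.I := by
    simp [Finset.sum_range_succ, pow_succ, Nat.factorial]
    ring_nf
  rw [hsum] at h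
  norm_num [Nat.factorial] at h
  exact h

theorem cos_one_lt_and_sin_one_lt : Real.cos 1 < 0.5404 ∧ Real.sin 1 < 0.8416 := by
  have hI : Complex.exp Complex.I = Complex.exp ((1 : ℝ) * Complex.I) := by simp
  have hre := (Complex.re_le_norm _).trans norm_exp_I_sub_le
  have him := (Complex.im_le_norm _).trans norm_exp_I_sub_le
  rw [hI] at hre him
  simp only [Complex.sub_re, Complex.sub_im, Complex.exp_ofReal_mul_I_re,
    Complex.exp_ofReal_mul_I_im] at hre him
  norm_num at hre him
  constructor <;> linarith

theorem stmt19_general (R L' : ℝ) (hR : 2 ≤ R)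
    (hLip : ∀ θ θ' : D6, ‖θ‖ ≤ R → ‖θ'‖ ≤ R →
      ‖gradient Jstar θ - gradient Jstar θ'‖ ≤ L' * ‖θ - θ'‖) :
    L' ≥ 3 / 8 * (8 * Real.sin 1 + 10 * Real.cos 1 - 12) * R ^ 2 ∧
    L' ≥ 0.0505 * R ^ 2 := by
  obtain ⟨hcos, hsin⟩ := cos_one_lt_and_sin_one_lt
  set y := √(R ^ 2 - 1)
  have hy : y ^ 2 = R ^ 2 - 1 := Real.sq_sqrt (by nlinarith)
  have hnorm (s : ℝ) (hs : s ^ 2 = 1) : ‖twist s y‖ = R := by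
    rw [norm_twist, hy, hs, add_sub_cancel, Real.sqrt_sq (by linarith)]
  have hdist : ‖twist 1 y - twist (-1) y‖ = 2 := by
    rw [twist_sub, norm_twist]
    norm_num
  have hLip₁ : ‖gradient Jstar (twist 1 y) - gradient Jstar (twist (-1) y)‖ ≤ L' * 2 :=
    (hLip _ _ (hnorm 1 (by norm_num)).le (hnorm (-1) (by norm_num)).le).trans_eq (by rw [hdist])
  have hunit : ‖twist 1 0‖ = 1 := by simp [norm_twist]
  have hkey : (R ^ 2 - 1) * (2 - 2 * Real.cos 1 - Real.sin 1) ≤ L' := calc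
    _ = -⟪gradient Jstar (twist 1 y) - gradient Jstar (twist (-1) y), twist 1 0⟫ / 2 := by
      rw [inner_sub_left, inner_gradient_Jstar_twist one_ne_zero,
        inner_gradient_Jstar_twist (by norm_num), hy]
      simp only [Real.sin_neg, Real.cos_neg]
      ring
    _ ≤ ‖gradient Jstar (twist 1 y) - gradient Jstar (twist (-1) y)‖ * ‖twist 1 0‖ / 2 := by
      gcongr
      exact (neg_le_abs _).trans (abs_real_inner_le_norm _ _)
    _ ≤ L' := by rw [hunit, mul_one]; linarith
  constructor <;> nlinarith

theorem stmt19 (R L' : ℝ) (hR : 2 ≤ R) (hL' : 0 ≤ L')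
    (hLip : ∀ θ θ' : D6, ‖θ‖ ≤ R → ‖θ'‖ ≤ R →
      ‖gradient Jstar θ - gradient Jstar θ'‖ ≤ L' * ‖θ - θ'‖) :
    L' ≥ 3 / 8 * (8 * Real.sin 1 + 10 * Real.cos 1 - 12) * R ^ 2 ∧
    L' ≥ 0.0505 * R ^ 2 :=
  stmt19_general R L' hR hLip
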